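/- In any profile whose antisymmetric margin function on {a,b,c,d} satisfies 0 < m(d,a) < m(b,d) < m(d,c) < m(a,c) < m(c,b) < m(b,a) (ordinal margin graph M_5), the defensible set is exactly {d}. -/

import Mathlib

/-!
Each of `a`, `b`, `c` has an attacker that nobody beats by as much: `b` beats `a` by the largest
margin of all; `c` beats `b` by `m c b`, while `c` loses only to `a` and `d`, by the smaller
margins `m a c` and `m d c`; `d` beats `c` by `m d c`, while `d` loses only to `b`, by the smaller
margin `m b d`. Conversely the only attacker of `d` is `b`, and `c` beats `b` by more than `m b d`.
-/

inductive Alt : Type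
  | a | b | c | d
deriving DecidableEq

open Alt

def Defensible {α : Type*} (m : α → α → ℤ) (x : α) : Prop :=
  ∀ y, ∃ z, m y x ≤ m z y

theorem not_defensible_of_forall_lt {α : Type*} {m : α → α → ℤ} {x : α} (y : α)
    (h : ∀ z, m z y < m y x) : ¬Defensible m x := fun hx =>
  let ⟨z, hz⟩ := hx y
  (h z).not_ge hz

structure IsM5 (m : Alt → Alt → ℤ) : Prop where
  anti : ∀ x y, m x y = -m y x
  da_pos : 0 < m d a
  da_lt_bd : m d a < m b d
  bd_lt_dc : m b d < m d c
  dc_lt_ac : m d c < m a c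
  ac_lt_cb : m a c < m c b
  cb_lt_ba : m c b < m b a

namespace IsM5

variable {m : Alt → Alt → ℤ}

theorem self_eq_zero (hm : IsM5 m) (x : Alt) : m x x = 0 := by
  linarith [hm.anti x x]

theorem not_defensible_a (hm : IsM5 m) : ¬Defensible m a :=
  not_defensible_of_forall_lt b fun z => by
    cases z <;> linarith [hm.anti a b, hm.anti d b, hm.self_eq_zero b, hm.da_pos, hm.da_lt_bd,
      hm.bd_lt_dc, hm.dc_lt_ac, hm.ac_lt_cb, hm.cb_lt_ba]

theorem not_defensible_b (hm : IsM5 m) : ¬Defensible m b :=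
  not_defensible_of_forall_lt c fun z => by
    cases z <;> linarith [hm.anti b c, hm.self_eq_zero c, hm.da_pos, hm.da_lt_bd, hm.bd_lt_dc,
      hm.dc_lt_ac, hm.ac_lt_cb]

theorem not_defensible_c (hm : IsM5 m) : ¬Defensible m c :=
  not_defensible_of_forall_lt d fun z => by
    cases z <;> linarith [hm.anti a d, hm.anti c d, hm.self_eq_zero d, hm.da_pos, hm.da_lt_bd,
      hm.bd_lt_dc]

theorem defensible_d (hm : IsM5 m) : Defensible m d := by
  intro y
  cases y
  · exact ⟨d, by linarith [hm.anti a d, hm.da_pos]⟩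
  · exact ⟨c, by linarith [hm.bd_lt_dc, hm.dc_lt_ac, hm.ac_lt_cb]⟩
  · exact ⟨d, by linarith [hm.anti c d, hm.da_pos, hm.da_lt_bd, hm.bd_lt_dc]⟩
  · exact ⟨b, by linarith [hm.self_eq_zero d, hm.da_pos, hm.da_lt_bd]⟩

end IsM5

/-- For any antisymmetric margin function realizing M_5, the
defensible set is exactly {d}. -/
theorem defensible_M5 (m : Alt → Alt → ℤ) (hanti : ∀ x y, m x y = - m y x)
    (h1 : 0 < m d a) (h2 : m d a < m b d) (h3 : m b d < m d c)
    (h4 : m d c < m a c) (h5 : m a c < m c b) (h6 : m c b < m b a) :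
    {x : Alt | ∀ y : Alt, ∃ z : Alt, m y x ≤ m z y} = {d} := by
  have hm : IsM5 m := ⟨hanti, h1, h2, h3, h4, h5, h6⟩
  change {x | Defensible m x} = {d}
  ext x
  cases x <;>
    simp [hm.not_defensible_a, hm.not_defensible_b, hm.not_defensible_c, hm.defensible_d]
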